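/- Let T, S ∈ M_n(ℂ) be positive definite Hermitian matrices and suppose there are positive reals m ≤ m' < M' ≤ M with m·I ≤ T ≤ m'·I and M'·I ≤ S ≤ M·I in the Löwner order. Let 0 ≤ ν < κ ≤ 1, set h = M'/m', r = min{ν/κ, 1 − ν/κ} and r' = min{2r, 1 − 2r}. Then, in the Löwner order, r·(H_κ(T,S) + H_0(T,S) − 2·H_{κ/2}(T,S)) + K(h^{κ/2}, 2)^{r'} · H_ν(T,S) ≤ H_0(T,S) − (ν/κ)·(H_0(T,S) − H_κ(T,S)). -/

import Mathlib

open scoped ComplexOrder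

/-- Matrix power of a (Hermitian) matrix via the continuous functional calculus:
`t ↦ t ^ α` is applied to the eigenvalues. -/
noncomputable def mpow {n : ℕ} (T : Matrix (Fin n) (Fin n) ℂ) (α : ℝ) :
    Matrix (Fin n) (Fin n) ℂ :=
  cfc (fun x : ℝ => x ^ α) T

/-- The κ-weighted geometric mean `T ♯_κ S = T^(1/2) (T^(-1/2) S T^(-1/2))^κ T^(1/2)`. -/
noncomputable def geomMean {n : ℕ} (T S : Matrix (Fin n) (Fin n) ℂ) (κ : ℝ) :
    Matrix (Fin n) (Fin n) ℂ :=
  mpow T (1 / 2) * mpow (mpow T (-(1 / 2)) * S * mpow T (-(1 / 2))) κ * mpow T (1 / 2)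

/-- The operator Heinz mean `H_κ(T,S) = (T ♯_κ S + T ♯_{1-κ} S)/2`. -/
noncomputable def opHeinz {n : ℕ} (κ : ℝ) (T S : Matrix (Fin n) (Fin n) ℂ) :
    Matrix (Fin n) (Fin n) ℂ :=
  (2⁻¹ : ℝ) • (geomMean T S κ + geomMean T S (1 - κ))

/-- The Löwner order: `A ≤ B` iff `B - A` is positive semidefinite. -/
def LoewnerLE {n : ℕ} (A B : Matrix (Fin n) (Fin n) ℂ) : Prop := (B - A).PosSemidef

/-- The Kantorovich constant `K(t,2) = (t+1)^2/(4t)`. -/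
noncomputable def kantorovich (t : ℝ) : ℝ := (t + 1) ^ 2 / (4 * t)

/-
With `X = T^{-1/2} S T^{-1/2}`, every Heinz mean is `H_α(T,S) = T^{1/2} f_α(X) T^{1/2}` where
`f_α(t) = (t^α + t^{1-α})/2`. The map `f ↦ T^{1/2} f(X) T^{1/2}` is linear and monotone in `f` on
the spectrum of `X`, which lies in `[h, ∞)` because `h T ≤ M' I ≤ S`. So the claim reduces to a
scalar inequality for `t ≥ h`. Putting `x = t^{κ/2}`, that inequality is the sum of two instances
(weights `ν/κ` and `1 - ν/κ`, the second scaled by `t^{1-κ}`) of the refined Young inequality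
`r (x-1)² + K(x)^{r'} x^{2v} ≤ 1 - v + v x²` (where `r = min(v, 1-v)`), combined with monotonicity of `K` on `[1, ∞)`. The
refined Young inequality comes from weighted AM-GM applied to `1` or `x` and `(x+1)/2`, using
`((x+1)/2)² = K(x) x`.
-/

lemma kantorovich_pos {t : ℝ} (ht : 0 < t) : 0 < kantorovich t := by
  unfold kantorovich; positivity

lemma kantorovich_mul_self {t : ℝ} (ht : t ≠ 0) : kantorovich t * t = ((t + 1) / 2) ^ 2 := by
  unfold kantorovich; field_simp; ring

lemma kantorovich_monotoneOn : MonotoneOn kantorovich (Set.Ici 1) := by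
  intro x (hx : 1 ≤ x) y (hy : 1 ≤ y) hxy
  unfold kantorovich
  rw [div_le_div_iff₀ (by positivity) (by positivity)]
  nlinarith [mul_nonneg (sub_nonneg.mpr hxy) (sub_nonneg.mpr (one_le_mul_of_one_le_of_one_le hx hy))]

lemma add_one_div_two_rpow_two_mul {t s : ℝ} (ht : 0 < t) :
    ((t + 1) / 2) ^ (2 * s) = kantorovich t ^ s * t ^ s := by
  rw [Real.rpow_mul (by positivity), Real.rpow_two, ← kantorovich_mul_self ht.ne',
    Real.mul_rpow (kantorovich_pos ht).le ht.le]

lemma kantorovich_rpow_mul_rpow_le {t w : ℝ} (ht : 0 < t) (hw₀ : 0 ≤ w) (hw₁ : w ≤ 1) :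
    kantorovich t ^ min w (1 - w) * t ^ w ≤ 1 - w + w * t := by
  rcases le_total w (1 / 2) with hw | hw
  · have := Real.geom_mean_le_arith_mean2_weighted (p₁ := 1) (p₂ := (t + 1) / 2)
      (w₁ := 1 - 2 * w) (w₂ := 2 * w) (by linarith) (by linarith) zero_le_one (by positivity)
      (by ring)
    rw [Real.one_rpow, one_mul, add_one_div_two_rpow_two_mul ht] at this
    rw [min_eq_left (by linarith)]
    linarith
  · have := Real.geom_mean_le_arith_mean2_weighted (p₁ := t) (p₂ := (t + 1) / 2)
      (w₁ := 2 * w - 1) (w₂ := 2 * (1 - w)) (by linarith) (by linarith) ht.le (by positivity)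
      (by ring)
    rw [add_one_div_two_rpow_two_mul ht] at this
    calc kantorovich t ^ min w (1 - w) * t ^ w
        = t ^ (2 * w - 1) * (kantorovich t ^ (1 - w) * t ^ (1 - w)) := by
          rw [min_eq_right (by linarith), mul_left_comm, ← Real.rpow_add ht]
          ring_nf
      _ ≤ 1 - w + w * t := by linarith

lemma sq_mul_add_kantorovich_rpow_mul_rpow_le {x v : ℝ} (hx : 0 < x) (hv₀ : 0 ≤ v)
    (hv₁ : v ≤ 1) :
    min v (1 - v) * (x - 1) ^ 2
        + kantorovich x ^ min (2 * min v (1 - v)) (1 - 2 * min v (1 - v)) * x ^ (2 * v)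
      ≤ 1 - v + v * x ^ 2 := by
  rcases le_total v (1 / 2) with hv | hv
  · have := kantorovich_rpow_mul_rpow_le hx (w := 2 * v) (by linarith) (by linarith)
    rw [min_eq_left (by linarith)]
    nlinarith
  · have := kantorovich_rpow_mul_rpow_le hx (w := 2 * v - 1) (by linarith) (by linarith)
    have hmin : min (2 * (1 - v)) (1 - 2 * (1 - v)) = min (2 * v - 1) (1 - (2 * v - 1)) := by
      rw [min_comm]; ring_nf
    have hpow : x ^ (2 * v) = x ^ (2 * v - 1) * x := by
      rw [← Real.rpow_add_one hx.ne']; ring_nf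
    rw [min_eq_right (by linarith), hmin, hpow, ← mul_assoc]
    nlinarith

noncomputable def scalarHeinz (κ t : ℝ) : ℝ := 2⁻¹ * (t ^ κ + t ^ (1 - κ))

lemma scalarHeinz_refinement {h t ν κ r r' : ℝ} (hh : 1 ≤ h) (ht : h ≤ t) (hν : 0 ≤ ν)
    (hνκ : ν < κ) (hr : r = min (ν / κ) (1 - ν / κ)) (hr' : r' = min (2 * r) (1 - 2 * r)) :
    r * (scalarHeinz κ t + scalarHeinz 0 t - 2 * scalarHeinz (κ / 2) t)
        + kantorovich (h ^ (κ / 2)) ^ r' * scalarHeinz ν t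
      ≤ scalarHeinz 0 t - ν / κ * (scalarHeinz 0 t - scalarHeinz κ t) := by
  have hκ : 0 < κ := hν.trans_lt hνκ
  have ht₀ : 0 < t := by linarith
  set μ := ν / κ with hμ
  have hμ₀ : 0 ≤ μ := by positivity
  have hμ₁ : μ ≤ 1 := by rw [hμ, div_le_one hκ]; exact hνκ.le
  have hr₀ : 0 ≤ r := by rw [hr]; exact le_min hμ₀ (by linarith)
  have hr₁ : r ≤ 1 / 2 := by
    rw [hr]; exact min_le_iff.mpr ((le_total μ (1 / 2)).imp id fun h => by linarith)
  have hr'₀ : 0 ≤ r' := by rw [hr']; exact le_min (by linarith) (by linarith)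
  unfold scalarHeinz
  simp only [Real.rpow_zero, sub_zero, Real.rpow_one]
  set x := t ^ (κ / 2) with hx
  set w := t ^ (1 - κ) with hw
  have hx₀ : 0 < x := by positivity
  have hw₀ : 0 < w := by positivity
  have hx2 : t ^ κ = x ^ 2 := by
    rw [hx, ← Real.rpow_natCast, ← Real.rpow_mul ht₀.le]; norm_num
  have hx2μ : t ^ ν = x ^ (2 * μ) := by
    rw [hx, ← Real.rpow_mul ht₀.le]; congr 1; rw [hμ]; field_simp
  have hwx2 : t = w * x ^ 2 := by
    rw [← hx2, hw, ← Real.rpow_add ht₀]; norm_num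
  have hwx : t ^ (1 - κ / 2) = w * x := by
    rw [hw, hx, ← Real.rpow_add ht₀]; ring_nf
  have hwx2μ : t ^ (1 - ν) = w * x ^ (2 * (1 - μ)) := by
    rw [hw, hx, ← Real.rpow_mul ht₀.le, ← Real.rpow_add ht₀]; congr 1; rw [hμ]; field_simp; ring
  have hK : kantorovich (h ^ (κ / 2)) ^ r' ≤ kantorovich x ^ r' := by
    have h₁ : 1 ≤ h ^ (κ / 2) := Real.one_le_rpow hh (by positivity)
    have h₂ : h ^ (κ / 2) ≤ x := Real.rpow_le_rpow (by linarith) ht (by positivity)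
    exact Real.rpow_le_rpow (kantorovich_pos (by linarith)).le
      (kantorovich_monotoneOn h₁ (h₁.trans h₂) h₂) hr'₀
  have L₁ := sq_mul_add_kantorovich_rpow_mul_rpow_le hx₀ hμ₀ hμ₁
  have L₂ := sq_mul_add_kantorovich_rpow_mul_rpow_le hx₀ (v := 1 - μ) (by linarith) (by linarith)
  rw [sub_sub_cancel, min_comm, ← hr, ← hr'] at L₂
  rw [← hr, ← hr'] at L₁
  rw [hx2, hx2μ, hwx, hwx2μ, hwx2]
  have hK' := mul_le_mul_of_nonneg_right hK
    (by positivity : (0 : ℝ) ≤ x ^ (2 * μ) + w * x ^ (2 * (1 - μ)))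
  linear_combination (1 / 2 : ℝ) * L₁ + (w / 2) * L₂ + (1 / 2 : ℝ) * hK'

open scoped MatrixOrder

section
variable {ι : Type*} [Fintype ι] [DecidableEq ι]

lemma Matrix.continuousOn_spectrum (f : ℝ → ℝ) (A : Matrix ι ι ℂ) :
    ContinuousOn f (spectrum ℝ A) :=
  A.finite_real_spectrum.continuousOn f

noncomputable def conjCfc (P X : Matrix ι ι ℂ) : (ℝ → ℝ) →ₗ[ℝ] Matrix ι ι ℂ where
  toFun f := P * cfc f X * P
  map_add' f g := by
    rw [Pi.add_def, cfc_add X f g (X.continuousOn_spectrum f) (X.continuousOn_spectrum g),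
      mul_add, add_mul]
  map_smul' c f := by
    rw [Pi.smul_def, cfc_smul c f X (X.continuousOn_spectrum f), mul_smul_comm, smul_mul_assoc,
      RingHom.id_apply]

lemma conjCfc_apply (P X : Matrix ι ι ℂ) (f : ℝ → ℝ) : conjCfc P X f = P * cfc f X * P := rfl

lemma conjCfc_mono {P X : Matrix ι ι ℂ} (hP : IsSelfAdjoint P) {f g : ℝ → ℝ}
    (hfg : ∀ x ∈ spectrum ℝ X, f x ≤ g x) : conjCfc P X f ≤ conjCfc P X g :=
  hP.conjugate_le_conjugate (cfc_mono hfg (X.continuousOn_spectrum f) (X.continuousOn_spectrum g))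
end

section
variable {n : ℕ}

lemma isSelfAdjoint_mpow (T : Matrix (Fin n) (Fin n) ℂ) (α : ℝ) : IsSelfAdjoint (mpow T α) :=
  cfc_predicate _ _

lemma mpow_neg_half_mul_mul_mpow_neg_half {T : Matrix (Fin n) (Fin n) ℂ} (hT : T.PosDef) :
    mpow T (-(1 / 2)) * T * mpow T (-(1 / 2)) = 1 := by
  nth_rw 2 [← cfc_id' ℝ T]
  rw [mpow, ← cfc_mul _ _ _ (T.continuousOn_spectrum _) (T.continuousOn_spectrum _),
    ← cfc_mul _ _ _ (T.continuousOn_spectrum _) (T.continuousOn_spectrum _), ← cfc_one ℝ T]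
  refine cfc_congr fun x hx => ?_
  have hx : 0 < x := hT.isStrictlyPositive.spectrum_pos hx
  rw [mul_comm, ← mul_assoc, ← Real.rpow_add hx]
  norm_num [Real.rpow_neg_one, hx.ne']

lemma le_of_mem_spectrum_conj_mpow_neg_half {T S : Matrix (Fin n) (Fin n) ℂ} (hT : T.PosDef)
    (hS : IsSelfAdjoint S) {c : ℝ} (hTS : c • T ≤ S) :
    ∀ x ∈ spectrum ℝ (mpow T (-(1 / 2)) * S * mpow T (-(1 / 2))), c ≤ x := by
  have hQ := isSelfAdjoint_mpow T (-(1 / 2))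
  refine (algebraMap_le_iff_le_spectrum (hS.conjugate_self hQ)).mp ?_
  calc algebraMap ℝ _ c = mpow T (-(1 / 2)) * (c • T) * mpow T (-(1 / 2)) := by
        rw [mul_smul_comm, smul_mul_assoc, mpow_neg_half_mul_mul_mpow_neg_half hT,
          Algebra.algebraMap_eq_smul_one]
    _ ≤ _ := hQ.conjugate_le_conjugate hTS

lemma opHeinz_eq_conjCfc (κ : ℝ) (T S : Matrix (Fin n) (Fin n) ℂ) :
    opHeinz κ T S = conjCfc (mpow T (1 / 2)) (mpow T (-(1 / 2)) * S * mpow T (-(1 / 2)))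
      (scalarHeinz κ) := by
  have : scalarHeinz κ = (2⁻¹ : ℝ) • ((fun x => x ^ κ) + fun x => x ^ (1 - κ)) := rfl
  rw [this, map_smul, map_add, conjCfc_apply, conjCfc_apply]
  rfl

end

theorem stmt_9_general {n : ℕ} (T S : Matrix (Fin n) (Fin n) ℂ)
    (hT : T.PosDef) (hS : S.PosDef)
    (m m' M' : ℝ) (hm : 0 < m) (hmm' : m ≤ m') (hm'M' : m' < M')
    (hT2 : LoewnerLE T ((m' : ℂ) • (1 : Matrix (Fin n) (Fin n) ℂ)))
    (hS1 : LoewnerLE ((M' : ℂ) • (1 : Matrix (Fin n) (Fin n) ℂ)) S)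
    (ν κ : ℝ) (hν : 0 ≤ ν) (hνκ : ν < κ)
    (h r r' : ℝ) (hh : h = M' / m')
    (hr : r = min (ν / κ) (1 - ν / κ)) (hr' : r' = min (2 * r) (1 - 2 * r)) :
    LoewnerLE
      (r • (opHeinz κ T S + opHeinz 0 T S - (2 : ℝ) • opHeinz (κ / 2) T S)
        + (kantorovich (h ^ (κ / 2)) ^ r') • opHeinz ν T S)
      (opHeinz 0 T S - (ν / κ) • (opHeinz 0 T S - opHeinz κ T S)) := by
  have hm' : 0 < m' := hm.trans_le hmm'
  have hh₁ : 1 ≤ h := by rw [hh, one_le_div hm']; exact hm'M'.le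
  have hTS : h • T ≤ S := by
    refine le_trans ?_ hS1
    have hM' : (M' : ℂ) • 1 - h • T = h • ((m' : ℂ) • 1 - T) := by
      rw [smul_sub, ← smul_assoc, Complex.real_smul, ← Complex.ofReal_mul, hh,
        div_mul_cancel₀ _ hm'.ne']
    rw [Matrix.le_iff, hM']
    exact Matrix.PosSemidef.smul hT2 (zero_le_one.trans hh₁)
  have hspec := le_of_mem_spectrum_conj_mpow_neg_half hT hS.isHermitian hTS
  rw [LoewnerLE, ← Matrix.le_iff]
  simp only [opHeinz_eq_conjCfc, ← map_smul, ← map_add, ← map_sub]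
  refine conjCfc_mono (isSelfAdjoint_mpow T _) fun t ht => ?_
  simpa using scalarHeinz_refinement hh₁ (hspec t ht) hν hνκ hr hr'

theorem stmt_9 {n : ℕ} (T S : Matrix (Fin n) (Fin n) ℂ)
    (hT : T.PosDef) (hS : S.PosDef)
    (m m' M' M : ℝ) (hm : 0 < m) (hmm' : m ≤ m') (hm'M' : m' < M') (hM'M : M' ≤ M)
    (hT1 : LoewnerLE ((m : ℂ) • (1 : Matrix (Fin n) (Fin n) ℂ)) T)
    (hT2 : LoewnerLE T ((m' : ℂ) • (1 : Matrix (Fin n) (Fin n) ℂ)))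
    (hS1 : LoewnerLE ((M' : ℂ) • (1 : Matrix (Fin n) (Fin n) ℂ)) S)
    (hS2 : LoewnerLE S ((M : ℂ) • (1 : Matrix (Fin n) (Fin n) ℂ)))
    (ν κ : ℝ) (hν : 0 ≤ ν) (hνκ : ν < κ) (hκ : κ ≤ 1)
    (h r r' : ℝ) (hh : h = M' / m')
    (hr : r = min (ν / κ) (1 - ν / κ)) (hr' : r' = min (2 * r) (1 - 2 * r)) :
    LoewnerLE
      (r • (opHeinz κ T S + opHeinz 0 T S - (2 : ℝ) • opHeinz (κ / 2) T S)
        + (kantorovich (h ^ (κ / 2)) ^ r') • opHeinz ν T S)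
      (opHeinz 0 T S - (ν / κ) • (opHeinz 0 T S - opHeinz κ T S)) :=
  stmt_9_general T S hT hS m m' M' hm hmm' hm'M' hT2 hS1 ν κ hν hνκ h r r' hh hr hr'
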